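/- arXiv:2404.06002 — 2 statements merged into one kernel-verified Lean document; each statement's English description precedes it below -/
import Mathlib

section
/- Let F be a forest with λ_LC(F) = (κ_1, …, κ_m) and let e = uv be an internal edge of F. (a) If both u and v are deep vertices of degree 2, with N(u) = {t, v} and N(v) = {u, w}, then λ_LC(F ∖ e) is obtained from λ_LC(F) by removing the two parts equal to 1 corresponding to the leaf components {u} and {v}, removing the parts κ_i and κ_j equal to the orders of the leaf components containing t and w, and inserting the parts κ_i + 1 and κ_j + 1 (then sorting into nonincreasing order). (b) If exactly one endpoint, say u, is a deep vertex of degree 2, with N(u) = {t, v}, then λ_LC(F ∖ e) is obtained from λ_LC(F) by removing the part 1 corresponding to the leaf component {u}, removing the part κ_i equal to the order of the leaf component containing t, and inserting κ_i + 1. (c) If neither u nor v is a deep vertex of degree 2, then λ_LC(F ∖ e) = λ_LC(F). -/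
open scoped Classical

namespace CSFPaper

noncomputable section

/-- Chromatic symmetric function: the coefficient of a monomial `d` is the number of
proper colorings `κ : V → ℕ` whose color-count vector is `d`. -/
def csf {V : Type*} [Fintype V] (G : SimpleGraph V) : MvPowerSeries ℕ ℚ :=
  fun d : ℕ →₀ ℕ =>
    (Nat.card {κ : V → ℕ //
      (∀ u w : V, G.Adj u w → κ u ≠ κ w) ∧
      ∀ i : ℕ, d i = Nat.card {v : V // κ v = i}} : ℚ)

/-- The star graph on `k` vertices: vertex `0` is adjacent to all other vertices. -/
def starGraph (k : ℕ) : SimpleGraph (Fin k) where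
  Adj a b := a ≠ b ∧ (a.val = 0 ∨ b.val = 0)
  symm := ⟨fun a b h => ⟨h.1.symm, h.2.symm⟩⟩
  loopless := ⟨fun a h => h.1 rfl⟩

/-- The star-basis element `st_λ`. -/
def stPart {n : ℕ} (p : Nat.Partition n) : MvPowerSeries ℕ ℚ :=
  (p.parts.map fun k => csf (starGraph k)).prod

/-- The parts of a multiset of naturals, in nonincreasing order. -/
def descSort (m : Multiset ℕ) : List ℕ := (m.sort (· ≤ ·)).reverse

/-- Lexicographic (strict) order on partitions presented as multisets. -/
def msLexLT (a b : Multiset ℕ) : Prop := List.Lex (· < ·) (descSort a) (descSort b)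

def msLexLE (a b : Multiset ℕ) : Prop := a = b ∨ msLexLT a b

/-- `p` is the leading partition of the expansion with coefficients `c`:
it has a nonzero coefficient and is lexicographically smallest such. -/
def IsLeading {n : ℕ} (c : Nat.Partition n → ℚ) (p : Nat.Partition n) : Prop :=
  c p ≠ 0 ∧ ∀ q : Nat.Partition n, c q ≠ 0 → msLexLE p.parts q.parts

variable {V : Type*}

/-- The set of internal edges: edges whose two endpoints both have degree at least 2. -/
def internalEdges [Fintype V] (G : SimpleGraph V) : Set (Sym2 V) :=
  {e | e ∈ G.edgeSet ∧ ∀ v ∈ e, 2 ≤ G.degree v}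

def numInternalEdges [Fintype V] (G : SimpleGraph V) : ℕ := Nat.card (internalEdges G)

/-- The graph obtained from `G` by deleting all internal edges. -/
def lcGraph [Fintype V] (G : SimpleGraph V) : SimpleGraph V := G.deleteEdges (internalEdges G)

/-- The multiset of orders of the connected components of `G`. -/
def compSizes [Fintype V] (G : SimpleGraph V) : Multiset ℕ :=
  ((Finset.univ : Finset V).image G.connectedComponentMk).val.map
    fun C => Nat.card C.supp

/-- The leaf component partition `λ_LC(F) = λ(F \ I(F))` (as a multiset of component orders). -/
def lcMultiset [Fintype V] (G : SimpleGraph V) : Multiset ℕ := compSizes (lcGraph G)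

/-- The order of the leaf component of `G` containing `x`. -/
def leafCompOrder [Fintype V] (G : SimpleGraph V) (x : V) : ℕ :=
  Nat.card ((lcGraph G).connectedComponentMk x).supp

/-- A deep vertex: an internal vertex all of whose neighbors are internal. -/
def IsDeep [Fintype V] (G : SimpleGraph V) (v : V) : Prop :=
  2 ≤ G.degree v ∧ ∀ u, G.Adj v u → 2 ≤ G.degree u

/-- Dot contraction of the edge `uv`, realized on the same vertex set: the edge is
contracted onto `u`, and `v` becomes the new isolated vertex. -/
def dotContract (G : SimpleGraph V) (u v : V) : SimpleGraph V where
  Adj a b := a ≠ b ∧ a ≠ v ∧ b ≠ v ∧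
    (G.Adj a b ∨ (a = u ∧ G.Adj v b) ∨ (b = u ∧ G.Adj a v))
  symm := by
    refine ⟨?_⟩
    rintro a b ⟨h1, h2, h3, h4⟩
    refine ⟨h1.symm, h3, h2, ?_⟩
    rcases h4 with h | ⟨rfl, h⟩ | ⟨rfl, h⟩
    · exact Or.inl h.symm
    · exact Or.inr (Or.inr ⟨rfl, h.symm⟩)
    · exact Or.inr (Or.inl ⟨rfl, h.symm⟩)
  loopless := by refine ⟨?_⟩; rintro a ⟨h, -⟩; exact h rfl

/-- Leaf contraction of the edge `uv`, realized on the same vertex set: the edge is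
contracted onto `u`, and `v` becomes the new pendant leaf `ℓ_e` attached to `u`. -/
def leafContract (G : SimpleGraph V) (u v : V) : SimpleGraph V where
  Adj a b := a ≠ b ∧ ((a = u ∧ b = v) ∨ (a = v ∧ b = u) ∨ (dotContract G u v).Adj a b)
  symm := by
    refine ⟨?_⟩
    rintro a b ⟨h1, h2⟩
    refine ⟨h1.symm, ?_⟩
    rcases h2 with ⟨rfl, rfl⟩ | ⟨rfl, rfl⟩ | h
    · exact Or.inr (Or.inl ⟨rfl, rfl⟩)
    · exact Or.inl ⟨rfl, rfl⟩
    · exact Or.inr (Or.inr ((dotContract G u v).adj_symm h))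
  loopless := by refine ⟨?_⟩; rintro a ⟨h, -⟩; exact h rfl


end

end CSFPaper

/-!
Deleting an internal edge `uv` lowers the degrees of `u` and `v` by one and no others, so the
only edges that stop being internal are the remaining edges at an endpoint of degree 2. If that
endpoint `u` is deep, its leaf component is `{u}` and it gets attached to the leaf component of
its other neighbour `t`, which replaces the parts `1` and `κ` by `κ + 1`; if it is not deep, its
other neighbour is a leaf and nothing changes. In case (a) the two attachments happen in
distinct leaf components because `uv` is a bridge of the forest.
-/

open SimpleGraph Finset

theorem Finset.univ_val_map_eq_of_merge {α β M : Type*} [Fintype α] [Fintype β] [DecidableEq α]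
    [Add M] [DecidableEq M] {φ : α → β} {f : α → M} {g : β → M} {a b : α} (hab : a ≠ b)
    (hφ : Function.Surjective φ) (hφab : φ a = φ b) (hinj : Set.InjOn φ {b}ᶜ)
    (hga : g (φ a) = f a + f b) (hg : ∀ x, x ≠ a → x ≠ b → g (φ x) = f x) :
    univ.val.map g = (f a + f b) ::ₘ ((univ.val.map f).erase (f a)).erase (f b) := by
  set rest := ((univ.erase b).erase a).val
  have ha : a ∈ univ.erase b := mem_erase.2 ⟨hab, mem_univ a⟩
  have hrest : (univ.erase b).val = a ::ₘ rest := by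
    rw [← insert_val_of_notMem (notMem_erase a _), insert_erase ha]
  have huniv : (univ : Finset α).val = a ::ₘ b ::ₘ rest := by
    rw [Multiset.cons_swap, ← hrest, ← insert_val_of_notMem (notMem_erase b _),
      insert_erase (mem_univ b)]
  have himage : (univ.erase b).image φ = univ := by
    refine eq_univ_of_forall fun y => ?_
    obtain ⟨x, rfl⟩ := hφ y
    by_cases hx : x = b
    · exact mem_image.2 ⟨a, ha, hx ▸ hφab⟩
    · exact mem_image_of_mem φ (mem_erase.2 ⟨hx, mem_univ x⟩)
  have hrest_map : rest.map (g ∘ φ) = rest.map f :=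
    Multiset.map_congr rfl fun x hx => by
      simp only [rest, mem_val, mem_erase] at hx
      exact hg x hx.1 hx.2.1
  rw [← himage, image_val_of_injOn (hinj.mono (by simp)), Multiset.map_map, hrest, huniv,
    Multiset.map_cons, Multiset.map_cons, Multiset.map_cons, Function.comp_apply, hga,
    hrest_map, Multiset.erase_cons_head, Multiset.erase_cons_head]

namespace SimpleGraph

variable {V : Type*} {G : SimpleGraph V} {a b u v x y : V}

theorem reachable_sup_edge_iff (hab : a ≠ b) :
    (G ⊔ edge a b).Reachable x y ↔
      G.Reachable x y ∨ (G.Reachable x a ∧ G.Reachable b y) ∨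
        (G.Reachable x b ∧ G.Reachable a y) := by
  constructor
  · rintro ⟨p⟩
    induction p with
    | nil => exact Or.inl .rfl
    | @cons x z y h _ ih =>
      rcases (sup_adj ..).1 h with h | h
      · exact ih.imp h.reachable.trans
          (Or.imp (And.imp_left h.reachable.trans) (And.imp_left h.reachable.trans))
      · obtain ⟨rfl, rfl⟩ | ⟨rfl, rfl⟩ := ((edge_adj ..).1 h).1
        · rcases ih with h' | ⟨h₁, h₂⟩ | ⟨-, h₂⟩
          exacts [Or.inr (Or.inl ⟨.rfl, h'⟩), Or.inl (h₁.symm.trans h₂), Or.inl h₂]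
        · rcases ih with h' | ⟨-, h₂⟩ | ⟨h₁, h₂⟩
          exacts [Or.inr (Or.inr ⟨.rfl, h'⟩), Or.inl h₂, Or.inl (h₁.symm.trans h₂)]
  · have hle : G ≤ G ⊔ edge a b := le_sup_left
    have hadj : (G ⊔ edge a b).Adj a b := (sup_adj ..).2 (Or.inr (by simp [edge_adj, hab]))
    rintro (h | ⟨h₁, h₂⟩ | ⟨h₁, h₂⟩)
    · exact h.mono hle
    · exact (h₁.mono hle).trans (hadj.reachable.trans (h₂.mono hle))
    · exact (h₁.mono hle).trans (hadj.reachable.symm.trans (h₂.mono hle))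

theorem supp_connectedComponentMk_sup_edge (hab : a ≠ b) :
    ((G ⊔ edge a b).connectedComponentMk a).supp =
      (G.connectedComponentMk a).supp ∪ (G.connectedComponentMk b).supp := by
  ext y
  simp only [ConnectedComponent.mem_supp_iff, ConnectedComponent.eq, Set.mem_union,
    reachable_sup_edge_iff hab]
  grind [Reachable.refl, Reachable.symm, Reachable.trans]

theorem supp_connectedComponentMk_sup_edge_of_not_reachable (hab : a ≠ b)
    (hxa : ¬G.Reachable x a) (hxb : ¬G.Reachable x b) :
    ((G ⊔ edge a b).connectedComponentMk x).supp = (G.connectedComponentMk x).supp := by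
  ext y
  simp only [ConnectedComponent.mem_supp_iff, ConnectedComponent.eq, reachable_sup_edge_iff hab]
  grind [Reachable.symm]

theorem eq_of_reachable_of_forall_not_adj (h : ∀ z, ¬G.Adj x z) {y : V} (hxy : G.Reachable x y) :
    x = y := by
  obtain ⟨_ | ⟨hadj, _⟩⟩ := hxy
  · rfl
  · exact absurd hadj (h _)

theorem supp_connectedComponentMk_eq_singleton (h : ∀ z, ¬G.Adj x z) :
    (G.connectedComponentMk x).supp = {x} := by
  ext y
  simp only [ConnectedComponent.mem_supp_iff, ConnectedComponent.eq, Set.mem_singleton_iff]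
  exact ⟨fun hyx => (eq_of_reachable_of_forall_not_adj h hyx.symm).symm, fun hyx => hyx ▸ .rfl⟩

theorem neighborSet_deleteEdges_of_ne (hxu : x ≠ u) (hxv : x ≠ v) :
    (G.deleteEdges {s(u, v)}).neighborSet x = G.neighborSet x := by
  ext z
  simp [deleteEdges_adj, hxu, hxv]

theorem ncard_neighborSet_deleteEdges_add_one [Finite V] (huv : G.Adj u v) :
    ((G.deleteEdges {s(u, v)}).neighborSet u).ncard + 1 = (G.neighborSet u).ncard := by
  have hset : (G.deleteEdges {s(u, v)}).neighborSet u = G.neighborSet u \ {v} := by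
    ext z
    simp [deleteEdges_adj, eq_comm (a := z), huv.ne]
  rw [hset]
  exact Set.ncard_sdiff_singleton_add_one huv

theorem ncard_neighborSet_deleteEdges_lt_two_iff [Finite V] (huv : G.Adj u v) :
    ((G.deleteEdges {s(u, v)}).neighborSet x).ncard < 2 ↔
      (G.neighborSet x).ncard < 2 ∨ ((x = u ∨ x = v) ∧ (G.neighborSet x).ncard = 2) := by
  by_cases hxu : x = u
  · subst hxu
    have := ncard_neighborSet_deleteEdges_add_one huv
    simp only [true_or, true_and]
    omega
  by_cases hxv : x = v
  · subst hxv
    have := ncard_neighborSet_deleteEdges_add_one huv.symm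
    rw [Sym2.eq_swap] at this
    simp only [or_true, true_and]
    omega
  simp [neighborSet_deleteEdges_of_ne hxu hxv, hxu, hxv]

end SimpleGraph

namespace CSFPaper

section

variable {V : Type*} {G : SimpleGraph V} {a b t u v w x y : V}

/-- `leafCompOrder G` is `compOrder (lcGraph G)` by definition. -/
noncomputable def compOrder (G : SimpleGraph V) (x : V) : ℕ :=
  Nat.card (G.connectedComponentMk x).supp

theorem compOrder_sup_edge_of_not_reachable (hab : a ≠ b) (hxa : ¬G.Reachable x a)
    (hxb : ¬G.Reachable x b) : compOrder (G ⊔ edge a b) x = compOrder G x := by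
  rw [compOrder, compOrder, supp_connectedComponentMk_sup_edge_of_not_reachable hab hxa hxb]

theorem compOrder_pos [Finite V] (G : SimpleGraph V) (x : V) : 0 < compOrder G x :=
  Nat.card_pos_iff.2 ⟨⟨x, ConnectedComponent.connectedComponentMk_mem⟩, inferInstance⟩

theorem compOrder_eq_one (h : ∀ z, ¬G.Adj x z) : compOrder G x = 1 := by
  rw [compOrder, supp_connectedComponentMk_eq_singleton h, Nat.card_unique]

variable [Fintype V]

theorem compSizes_eq_map_univ (G : SimpleGraph V) [Fintype G.ConnectedComponent] :
    compSizes G = univ.val.map fun C : G.ConnectedComponent => Nat.card C.supp := by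
  rw [compSizes, image_univ_of_surjective fun C => C.ind fun x => ⟨x, rfl⟩]

theorem compSizes_sup_edge (hab : ¬G.Reachable a b) :
    compSizes (G ⊔ edge a b) = (compOrder G a + compOrder G b) ::ₘ
      ((compSizes G).erase (compOrder G a)).erase (compOrder G b) := by
  have hne : a ≠ b := fun h => hab (h ▸ .rfl)
  have hmerge : (G ⊔ edge a b).Reachable a b :=
    ((reachable_sup_edge_iff hne).2 (Or.inr (Or.inl ⟨.rfl, .rfl⟩)))
  rw [compSizes_eq_map_univ, compSizes_eq_map_univ]
  refine univ_val_map_eq_of_merge (φ := ConnectedComponent.map (Hom.ofLE le_sup_left))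
    (fun h => hab (ConnectedComponent.eq.1 h))
    (fun C => C.ind fun x => ⟨G.connectedComponentMk x, rfl⟩) (ConnectedComponent.eq.2 hmerge)
    ?_ ?_ ?_
  · intro C hC D hD hCD
    induction C using ConnectedComponent.ind with | h x => ?_
    induction D using ConnectedComponent.ind with | h y => ?_
    simp only [Set.mem_compl_singleton_iff, ne_eq, ConnectedComponent.eq] at hC hD
    rcases (reachable_sup_edge_iff hne).1 (ConnectedComponent.eq.1 hCD) with h | ⟨-, h⟩ | ⟨h, -⟩
    · exact ConnectedComponent.eq.2 h
    · exact absurd h.symm hD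
    · exact absurd h hC
  · have hdisj : Disjoint (G.connectedComponentMk a).supp (G.connectedComponentMk b).supp :=
      Set.disjoint_left.2 fun y hya hyb => hab <|
        (ConnectedComponent.eq.1 hya).symm.trans (ConnectedComponent.eq.1 hyb)
    change Nat.card ((G ⊔ edge a b).connectedComponentMk a).supp = _
    simp only [Nat.card_coe_set_eq, supp_connectedComponentMk_sup_edge hne,
      Set.ncard_union_eq hdisj]
  · intro C hCa hCb
    induction C using ConnectedComponent.ind with | h x => ?_
    simp only [ne_eq, ConnectedComponent.eq] at hCa hCb
    change Nat.card ((G ⊔ edge a b).connectedComponentMk x).supp = _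
    rw [supp_connectedComponentMk_sup_edge_of_not_reachable hne hCa hCb]

theorem compSizes_sup_edge_of_forall_not_adj (h : ∀ z, ¬G.Adj a z) (hab : a ≠ b) :
    compSizes (G ⊔ edge a b) = (compOrder G b + 1) ::ₘ
      ((compSizes G).erase 1).erase (compOrder G b) := by
  rw [compSizes_sup_edge fun hr => hab (eq_of_reachable_of_forall_not_adj h hr),
    compOrder_eq_one h, add_comm]

theorem map_compOrder_le_compSizes {s : Multiset V}
    (hs : (s.map G.connectedComponentMk).Nodup) : s.map (compOrder G) ≤ compSizes G := by
  rw [show s.map (compOrder G) = (s.map G.connectedComponentMk).map fun C => Nat.card C.supp by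
    rw [Multiset.map_map]; rfl]
  exact Multiset.map_le_map <| (Multiset.le_iff_subset hs).2 fun C _ =>
    C.ind fun y => by simpa using ⟨y, .rfl⟩

theorem mem_internalEdges_iff :
    s(x, y) ∈ internalEdges G ↔ G.Adj x y ∧ 2 ≤ G.degree x ∧ 2 ≤ G.degree y := by
  simp [internalEdges]

theorem lcGraph_adj : (lcGraph G).Adj x y ↔ G.Adj x y ∧ (G.degree x < 2 ∨ G.degree y < 2) := by
  rw [lcGraph, deleteEdges_adj, mem_internalEdges_iff]
  grind

/-- The edges at `u`, other than `uv`, that stop being internal when `uv` is deleted. -/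
def releasedEdges (G : SimpleGraph V) (u v : V) : SimpleGraph V :=
  fromRel fun x y => x = u ∧ y ≠ v ∧ G.Adj u y ∧ G.degree u = 2

theorem lcGraph_deleteEdges (he : s(u, v) ∈ internalEdges G) :
    lcGraph (G.deleteEdges {s(u, v)}) = lcGraph G ⊔ releasedEdges G u v ⊔ releasedEdges G v u := by
  obtain ⟨huv, hu, hv⟩ := mem_internalEdges_iff.1 he
  ext x y
  -- Pass to `ncard`: the degrees in `G.deleteEdges _` that `lcGraph` unfolds to carry a classical
  -- `Fintype` instance, not the one the `degree` lemmas would synthesize.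
  simp only [sup_adj, lcGraph_adj, releasedEdges, fromRel_adj, ← card_neighborSet_eq_degree,
    ← Nat.card_eq_fintype_card, Nat.card_coe_set_eq] at hu hv ⊢
  simp only [ncard_neighborSet_deleteEdges_lt_two_iff huv, deleteEdges_adj, Set.mem_singleton_iff,
    Sym2.eq_iff]
  by_cases hxy : G.Adj x y
  · have hne := huv.ne
    have hxy_ne := hxy.ne
    have hyx := hxy.symm
    by_cases hxu : x = u <;> by_cases hxv : x = v <;> by_cases hyu : y = u <;>
      by_cases hyv : y = v <;> simp_all [-Order.lt_two_iff] <;> omega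
  · have hyx : ¬G.Adj y x := fun h => hxy h.symm
    refine iff_of_false (fun h => hxy h.1.1) ?_
    rintro ((h | ⟨-, ⟨rfl, -, h, -⟩ | ⟨rfl, -, h, -⟩⟩) | ⟨-, ⟨rfl, -, h, -⟩ | ⟨rfl, -, h, -⟩⟩) <;>
      simp_all

theorem adj_iff_of_degree_eq_two (hd : G.degree u = 2) (ht : G.Adj u t) (hv : G.Adj u v)
    (htv : t ≠ v) : G.Adj u x ↔ x = t ∨ x = v := by
  have h : G.neighborFinset u = {t, v} :=
    (eq_of_subset_of_card_le (by simp [insert_subset_iff, ht, hv])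
      (by rw [card_neighborFinset_eq_degree, hd, card_pair htv])).symm
  rw [← mem_neighborFinset, h, mem_insert, mem_singleton]

theorem releasedEdges_eq_edge (hd : G.degree u = 2) (ht : G.Adj u t) (hv : G.Adj u v)
    (htv : t ≠ v) : releasedEdges G u v = edge u t := by
  ext x y
  simp only [releasedEdges, fromRel_adj, edge_adj, adj_iff_of_degree_eq_two hd ht hv htv, hd,
    and_true]
  grind

theorem releasedEdges_le_lcGraph (huv : G.Adj u v) (hv : 2 ≤ G.degree v)
    (hu : ¬(IsDeep G u ∧ G.degree u = 2)) : releasedEdges G u v ≤ lcGraph G := by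
  have key : ∀ y, y ≠ v → G.Adj u y → G.degree u = 2 → G.degree y < 2 := by
    intro y hyv hy hd
    obtain ⟨z, hz, hdz⟩ : ∃ z, G.Adj u z ∧ G.degree z < 2 := by
      simpa [IsDeep, hd] using hu
    have hzv : z ≠ v := by rintro rfl; omega
    obtain rfl : y = z := ((adj_iff_of_degree_eq_two hd hz huv hzv).1 hy).resolve_right hyv
    exact hdz
  rintro x y ⟨-, ⟨rfl, hyv, hy, hd⟩ | ⟨rfl, hxv, hx, hd⟩⟩
  · exact lcGraph_adj.2 ⟨hy, Or.inr (key y hyv hy hd)⟩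
  · exact lcGraph_adj.2 ⟨hx.symm, Or.inl (key x hxv hx hd)⟩

theorem IsDeep.not_lcGraph_adj (h : IsDeep G u) (z : V) : ¬(lcGraph G).Adj u z := by
  rw [lcGraph_adj]
  rintro ⟨hz, hlt | hlt⟩
  · exact absurd h.1 (not_le.2 hlt)
  · exact absurd (h.2 z hz) (not_le.2 hlt)

theorem not_reachable_lcGraph (hF : G.IsAcyclic) (he : s(u, v) ∈ internalEdges G)
    (ht : G.Adj u t) (htv : t ≠ v) (hw : G.Adj v w) (hwu : w ≠ u) :
    ¬(lcGraph G).Reachable t w := by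
  intro htw
  have huv := (mem_internalEdges_iff.1 he).1
  have hle : lcGraph G ≤ G.deleteEdges {s(u, v)} :=
    deleteEdges_anti (Set.singleton_subset_iff.2 he)
  have hut : (G.deleteEdges {s(u, v)}).Adj u t := by simp [deleteEdges_adj, ht, htv, huv.ne]
  have hwv : (G.deleteEdges {s(u, v)}).Adj w v := by
    simp [deleteEdges_adj, hw.symm, hwu, huv.ne.symm]
  exact isAcyclic_iff_forall_adj_isBridge.1 hF huv
    (hut.reachable.trans ((htw.mono hle).trans hwv.reachable))

theorem lcMultiset_deleteEdges_of_not_isDeep (he : s(u, v) ∈ internalEdges G)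
    (hu : ¬(IsDeep G u ∧ G.degree u = 2)) (hv : ¬(IsDeep G v ∧ G.degree v = 2)) :
    lcMultiset (G.deleteEdges {s(u, v)}) = lcMultiset G := by
  obtain ⟨huv, hdu, hdv⟩ := mem_internalEdges_iff.1 he
  rw [lcMultiset, lcMultiset, lcGraph_deleteEdges he,
    sup_eq_left.2 (le_sup_of_le_left (releasedEdges_le_lcGraph huv.symm hdu hv)),
    sup_eq_left.2 (releasedEdges_le_lcGraph huv hdv hu)]

theorem lcMultiset_deleteEdges_of_isDeep_left (he : s(u, v) ∈ internalEdges G)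
    (hu : IsDeep G u) (hdu : G.degree u = 2) (hv : ¬(IsDeep G v ∧ G.degree v = 2))
    (ht : G.Adj u t) (htv : t ≠ v) :
    lcMultiset (G.deleteEdges {s(u, v)}) =
      (leafCompOrder G t + 1) ::ₘ (((lcMultiset G).erase 1).erase (leafCompOrder G t)) := by
  obtain ⟨huv, -, hdv⟩ := mem_internalEdges_iff.1 he
  rw [lcMultiset, lcGraph_deleteEdges he, releasedEdges_eq_edge hdu ht huv htv,
    sup_eq_left.2 (le_sup_of_le_left (releasedEdges_le_lcGraph huv.symm hu.1 hv))]
  exact compSizes_sup_edge_of_forall_not_adj hu.not_lcGraph_adj ht.ne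

theorem le_lcMultiset_of_isDeep (hG : G.IsAcyclic) (he : s(u, v) ∈ internalEdges G)
    (hu : IsDeep G u) (hv : IsDeep G v) (ht : G.Adj u t) (htv : t ≠ v) (hw : G.Adj v w)
    (hwu : w ≠ u) : 1 ::ₘ leafCompOrder G t ::ₘ 1 ::ₘ {leafCompOrder G w} ≤ lcMultiset G := by
  have huv := (mem_internalEdges_iff.1 he).1
  have hne_of_iso : ∀ {z z' : V}, (∀ y, ¬(lcGraph G).Adj z y) → z ≠ z' →
      (lcGraph G).connectedComponentMk z ≠ (lcGraph G).connectedComponentMk z' :=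
    fun hz hne heq => hne (eq_of_reachable_of_forall_not_adj hz (ConnectedComponent.eq.1 heq))
  have hnodup : ((u ::ₘ t ::ₘ v ::ₘ {w}).map (lcGraph G).connectedComponentMk).Nodup := by
    simp [hne_of_iso hu.not_lcGraph_adj, hne_of_iso hv.not_lcGraph_adj, ht.ne, huv.ne, hwu.symm,
      hw.ne, (hne_of_iso hv.not_lcGraph_adj htv.symm).symm,
      not_reachable_lcGraph hG he ht htv hw hwu]
  have h := map_compOrder_le_compSizes hnodup
  simp only [Multiset.map_cons, Multiset.map_singleton, compOrder_eq_one hu.not_lcGraph_adj,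
    compOrder_eq_one hv.not_lcGraph_adj] at h
  exact h

theorem lcMultiset_deleteEdges_of_isDeep (hG : G.IsAcyclic) (he : s(u, v) ∈ internalEdges G)
    (hu : IsDeep G u) (hdu : G.degree u = 2) (hv : IsDeep G v) (hdv : G.degree v = 2)
    (ht : G.Adj u t) (htv : t ≠ v) (hw : G.Adj v w) (hwu : w ≠ u) :
    lcMultiset (G.deleteEdges {s(u, v)}) =
      (leafCompOrder G t + 1) ::ₘ (leafCompOrder G w + 1) ::ₘ
        ((((lcMultiset G).erase 1).erase 1).erase (leafCompOrder G t)).erase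
          (leafCompOrder G w) := by
  have huv := (mem_internalEdges_iff.1 he).1
  set H := lcGraph G ⊔ edge u t
  set cs := compSizes (lcGraph G)
  set κt := compOrder (lcGraph G) t
  set κw := compOrder (lcGraph G) w
  have hv_iso : ∀ y, ¬H.Adj v y := by
    simp only [H, sup_adj, edge_adj, hv.not_lcGraph_adj, false_or]
    rintro y ⟨⟨rfl, -⟩ | ⟨rfl, -⟩, -⟩
    exacts [huv.ne rfl, htv rfl]
  have hκw : compOrder H w = κw :=
    compOrder_sup_edge_of_not_reachable ht.ne
      (fun h => hwu (eq_of_reachable_of_forall_not_adj hu.not_lcGraph_adj h.symm).symm)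
      (fun h => not_reachable_lcGraph hG he ht htv hw hwu h.symm)
  have hκt : κt + 1 ≠ 1 := by simpa using (compOrder_pos (lcGraph G) t).ne'
  have hmem : κw ∈ ((cs.erase 1).erase κt).erase 1 := by
    have hle : 1 ::ₘ κt ::ₘ 1 ::ₘ {κw} ≤ cs := le_lcMultiset_of_isDeep hG he hu hv ht htv hw hwu
    have := Multiset.erase_le_erase 1 <| Multiset.erase_le_erase κt <|
      Multiset.erase_le_erase 1 hle
    simp only [Multiset.erase_cons_head] at this
    exact Multiset.singleton_le.1 this
  rw [lcMultiset, lcGraph_deleteEdges he, releasedEdges_eq_edge hdu ht huv htv,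
    releasedEdges_eq_edge hdv hw huv.symm hwu, compSizes_sup_edge_of_forall_not_adj hv_iso hw.ne,
    hκw, compSizes_sup_edge_of_forall_not_adj hu.not_lcGraph_adj ht.ne,
    Multiset.erase_cons_tail _ hκt, Multiset.erase_cons_tail_of_mem hmem, Multiset.cons_swap,
    Multiset.erase_comm (cs.erase 1) κt 1]
  rfl

end

/-- **Deletion Lemma.** How the leaf component partition changes when an
internal edge `e = uv` of a forest is deleted, according to whether the endpoints are
deep vertices of degree 2. -/
theorem deletion_lemma
    {V : Type} [Fintype V] (F : SimpleGraph V) (hF : F.IsAcyclic)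
    (u v : V) (he : s(u, v) ∈ internalEdges F) :
    (∀ t w : V, IsDeep F u → F.degree u = 2 → IsDeep F v → F.degree v = 2 →
      F.Adj u t → t ≠ v → F.Adj v w → w ≠ u →
      lcMultiset (F.deleteEdges {s(u, v)}) =
        (leafCompOrder F t + 1) ::ₘ (leafCompOrder F w + 1) ::ₘ
          ((((lcMultiset F).erase 1).erase 1).erase (leafCompOrder F t)).erase
            (leafCompOrder F w)) ∧
    (∀ t : V, IsDeep F u → F.degree u = 2 → ¬(IsDeep F v ∧ F.degree v = 2) →
      F.Adj u t → t ≠ v →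
      lcMultiset (F.deleteEdges {s(u, v)}) =
        (leafCompOrder F t + 1) ::ₘ
          (((lcMultiset F).erase 1).erase (leafCompOrder F t))) ∧
    (¬(IsDeep F u ∧ F.degree u = 2) → ¬(IsDeep F v ∧ F.degree v = 2) →
      lcMultiset (F.deleteEdges {s(u, v)}) = lcMultiset F) :=
  ⟨fun _ _ hu hdu hv hdv ht htv hw hwu =>
      lcMultiset_deleteEdges_of_isDeep hF he hu hdu hv hdv ht htv hw hwu,
    fun _ hu hdu hv ht htv => lcMultiset_deleteEdges_of_isDeep_left he hu hdu hv ht htv,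
    lcMultiset_deleteEdges_of_not_isDeep he⟩

end CSFPaper
end

section
/- Let F be a forest and e = uv an internal edge of F. Let κ_i and κ_j be the orders of the leaf components of F containing u and v, respectively. Then λ_LC(F⊙e) is obtained from λ_LC(F) by removing the parts κ_i and κ_j and inserting the part κ_i + κ_j (then sorting into nonincreasing order). -/
open scoped Classical

namespace CSFPaper

noncomputable section

variable {V : Type*}

/-!
Deleting the internal edges of a graph leaves, around each internal vertex `x`, the star formed
by `x` and its leaf neighbours; this star is the leaf component of `x`. In `F ⊙ e` the vertex `v`
becomes a leaf hanging from `u`, and `u` takes over the neighbours of `v`. Since a forest has no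
triangles, every other vertex keeps its degree, and off `{u, v}` adjacency is unchanged. Hence the
leaf component of `u` in `F ⊙ e` is the union of the stars of `u` and `v` in `F`, while every
other leaf component stays as it was.
-/

open SimpleGraph

theorem _root_.SimpleGraph.IsAcyclic.not_adj_of_adj_of_adj {G : SimpleGraph V} (hG : G.IsAcyclic)
    {u v w : V} (huv : G.Adj u v) (hwu : G.Adj w u) : ¬ G.Adj w v := fun hwv =>
  hG (Walk.cons hwu (Walk.cons huv (Walk.cons hwv.symm Walk.nil))) <| by
    simp [Walk.cons_isCycle_iff, huv.ne, hwu.ne, hwv.ne, hwu.ne.symm, hwv.ne.symm]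

section ClosedSets

variable {G H : SimpleGraph V} {S : Set V}

theorem _root_.SimpleGraph.Reachable.mem_of_adj_closed
    (hS : ∀ a b, G.Adj a b → a ∈ S → b ∈ S) {x y : V} (h : G.Reachable x y) (hx : x ∈ S) :
    y ∈ S := by
  by_contra hy
  obtain ⟨p⟩ := h
  obtain ⟨d, -, hd, hd'⟩ := p.exists_boundary_dart S hx hy
  exact hd' (hS _ _ d.adj hd)

theorem _root_.SimpleGraph.Reachable.mono_on_compl (hS : ∀ a b, G.Adj a b → a ∈ S → b ∈ S)
    (hGH : ∀ a b, a ∉ S → b ∉ S → G.Adj a b → H.Adj a b)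
    {x y : V} (h : G.Reachable x y) (hx : x ∉ S) : H.Reachable x y := by
  obtain ⟨p⟩ := h
  induction p with
  | nil => rfl
  | cons hab _ ih =>
    have hb := fun hb => hx (hS _ _ hab.symm hb)
    exact (hGH _ _ hx hb hab).reachable.trans (ih hb)

theorem _root_.SimpleGraph.supp_connectedComponentMk_eq_of_adj_iff_on_compl
    (hG : ∀ a b, G.Adj a b → a ∈ S → b ∈ S) (hH : ∀ a b, H.Adj a b → a ∈ S → b ∈ S)
    (hGH : ∀ a b, a ∉ S → b ∉ S → (G.Adj a b ↔ H.Adj a b)) {x : V} (hx : x ∉ S) :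
    (G.connectedComponentMk x).supp = (H.connectedComponentMk x).supp := by
  ext y
  simp only [ConnectedComponent.mem_supp_iff, ConnectedComponent.eq, reachable_comm (v := x)]
  exact ⟨fun h => Reachable.mono_on_compl hG (fun a b ha hb => (hGH a b ha hb).1) h hx,
    fun h => Reachable.mono_on_compl hH (fun a b ha hb => (hGH a b ha hb).2) h hx⟩

end ClosedSets

section ComponentSizes

variable [Fintype V]

theorem compSizes_eq_map_image_supp (G : SimpleGraph V) :
    compSizes G = ((Finset.univ : Finset V).image
      fun x => (G.connectedComponentMk x).supp).val.map fun s : Set V => Nat.card s := by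
  change _ = (Finset.univ.image (ConnectedComponent.supp ∘ G.connectedComponentMk)).val.map _
  rw [← Finset.image_image, Finset.image_val_of_injOn ConnectedComponent.supp_injective.injOn,
    Multiset.map_map]
  rfl

theorem image_supp_eq_insert_insert (G : SimpleGraph V) (a b : V) :
    (Finset.univ.image fun x => (G.connectedComponentMk x).supp) =
      insert (G.connectedComponentMk a).supp (insert (G.connectedComponentMk b).supp
        ((Finset.univ.filter (· ∉ (G.connectedComponentMk a).supp ∪
          (G.connectedComponentMk b).supp)).image fun x => (G.connectedComponentMk x).supp)) := by
  ext T
  simp only [Finset.mem_image, Finset.mem_insert, Finset.mem_filter, Finset.mem_univ, true_and]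
  constructor
  · rintro ⟨x, rfl⟩
    by_cases hx : x ∈ (G.connectedComponentMk a).supp ∪ (G.connectedComponentMk b).supp
    · exact hx.imp (congrArg _) (fun hx => Or.inl (congrArg _ hx))
    · exact Or.inr (Or.inr ⟨x, hx, rfl⟩)
  · rintro (rfl | rfl | ⟨x, -, rfl⟩)
    exacts [⟨a, rfl⟩, ⟨b, rfl⟩, ⟨x, rfl⟩]

theorem compSizes_of_supp_eq_union {G H : SimpleGraph V} {a b : V}
    (hab : G.connectedComponentMk a ≠ G.connectedComponentMk b)
    (hS : (H.connectedComponentMk a).supp =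
      (G.connectedComponentMk a).supp ∪ (G.connectedComponentMk b).supp)
    (hGH : ∀ x y, x ∉ (H.connectedComponentMk a).supp → y ∉ (H.connectedComponentMk a).supp →
      (G.Adj x y ↔ H.Adj x y)) :
    compSizes H = (Nat.card (G.connectedComponentMk a).supp +
      Nat.card (G.connectedComponentMk b).supp) ::ₘ
      (((compSizes G).erase (Nat.card (G.connectedComponentMk a).supp)).erase
        (Nat.card (G.connectedComponentMk b).supp)) := by
  set A := (G.connectedComponentMk a).supp
  set B := (G.connectedComponentMk b).supp
  set S := (H.connectedComponentMk a).supp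
  have hGS : ∀ x y, G.Adj x y → x ∈ S → y ∈ S := by
    intro x y hxy hx
    rw [hS] at hx ⊢
    exact hx.imp (ConnectedComponent.mem_supp_of_adj_mem_supp _ · hxy)
      (ConnectedComponent.mem_supp_of_adj_mem_supp _ · hxy)
  have hoff : ∀ x ∉ S, (G.connectedComponentMk x).supp = (H.connectedComponentMk x).supp :=
    fun _ => supp_connectedComponentMk_eq_of_adj_iff_on_compl hGS
      (fun _ _ hxy hx => ConnectedComponent.mem_supp_of_adj_mem_supp _ hx hxy) hGH
  set Q := (Finset.univ.filter (· ∉ A ∪ B)).image fun x => (G.connectedComponentMk x).supp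
  have hH : (Finset.univ.image fun x => (H.connectedComponentMk x).supp) = insert S Q := by
    rw [image_supp_eq_insert_insert H a a, Finset.insert_idem]
    refine congrArg _ (Finset.ext fun T => ?_)
    simp only [Q, Finset.mem_image, Finset.mem_filter, Finset.mem_univ, true_and, Set.union_self,
      ← hS]
    exact exists_congr fun x => and_congr_right fun hx => by rw [hoff x hx]
  have hQ : ∀ T ∈ Q, ¬ T ⊆ A ∪ B := by
    simp only [Q, Finset.mem_image, Finset.mem_filter]
    rintro _ ⟨x, ⟨-, hx⟩, rfl⟩ hT
    exact hx (hT rfl)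
  have hA : A ∉ insert B Q := by
    rw [Finset.mem_insert, not_or]
    exact ⟨fun h => hab (ConnectedComponent.supp_injective h),
      fun h => hQ A h Set.subset_union_left⟩
  have hB : B ∉ Q := fun h => hQ B h Set.subset_union_right
  have hSQ : S ∉ Q := fun h => hQ S h hS.le
  rw [compSizes_eq_map_image_supp, compSizes_eq_map_image_supp, image_supp_eq_insert_insert G a b,
    hH, Finset.insert_val_of_notMem hA, Finset.insert_val_of_notMem hB,
    Finset.insert_val_of_notMem hSQ, Multiset.map_cons, Multiset.map_cons, Multiset.map_cons,
    Multiset.erase_cons_head, Multiset.erase_cons_head, hS, Nat.card_coe_set_eq,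
    Nat.card_coe_set_eq, Nat.card_coe_set_eq,
    Set.ncard_union_eq (G.pairwise_disjoint_supp_connectedComponent hab)]

end ComponentSizes

section LeafComponents

variable [Fintype V] {G : SimpleGraph V}

theorem lcGraph_adj_s10 {a b : V} :
    (lcGraph G).Adj a b ↔ G.Adj a b ∧ (G.degree a ≤ 1 ∨ G.degree b ≤ 1) := by
  simp only [lcGraph, deleteEdges_adj, internalEdges, Set.mem_ofPred_eq, mem_edgeSet, Sym2.mem_iff,
    forall_eq_or_imp, forall_eq]
  refine and_congr_right fun hab => ?_
  simp only [hab, true_and]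
  omega

theorem eq_of_adj_of_adj_of_degree_le_one {x y z : V} (hy : G.degree y ≤ 1) (hyx : G.Adj y x)
    (hyz : G.Adj y z) : z = x :=
  Finset.card_le_one.mp (G.card_neighborFinset_eq_degree y ▸ hy) _
    ((G.mem_neighborFinset y z).2 hyz) _ ((G.mem_neighborFinset y x).2 hyx)

theorem supp_lcGraph_of_two_le_degree {x : V} (hx : 2 ≤ G.degree x) :
    ((lcGraph G).connectedComponentMk x).supp = {y | y = x ∨ G.Adj x y ∧ G.degree y ≤ 1} := by
  ext y
  constructor
  · intro hy
    refine (ConnectedComponent.exact hy).symm.mem_of_adj_closed ?_ (Or.inl rfl)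
    rintro a b hab (rfl | ⟨hxa, ha⟩) <;> rw [lcGraph_adj_s10] at hab
    · exact Or.inr ⟨hab.1, hab.2.resolve_left (by omega)⟩
    · exact Or.inl (eq_of_adj_of_adj_of_degree_le_one ha hxa.symm hab.1)
  · rintro (rfl | ⟨hxy, hy⟩)
    · rfl
    · exact (ConnectedComponent.connectedComponentMk_eq_of_adj
        (lcGraph_adj_s10.2 ⟨hxy, Or.inr hy⟩)).symm

theorem connectedComponentMk_lcGraph_ne {x y : V} (hx : 2 ≤ G.degree x) (hy : 2 ≤ G.degree y)
    (hxy : x ≠ y) : (lcGraph G).connectedComponentMk x ≠ (lcGraph G).connectedComponentMk y := by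
  intro h
  have hx' : x ∈ ((lcGraph G).connectedComponentMk y).supp := h
  rw [supp_lcGraph_of_two_le_degree hy] at hx'
  rcases hx' with rfl | ⟨-, hx'⟩
  exacts [hxy rfl, by omega]

end LeafComponents

section LeafContraction

variable {F : SimpleGraph V} {u v : V}

theorem leafContract_adj_left_right (huv : u ≠ v) : (leafContract F u v).Adj u v :=
  ⟨huv, Or.inl ⟨rfl, rfl⟩⟩

theorem leafContract_adj_right_iff (huv : u ≠ v) {b : V} :
    (leafContract F u v).Adj v b ↔ b = u := by
  simp only [leafContract, dotContract]
  grind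

theorem leafContract_adj_left_iff (huv : u ≠ v) {b : V} (hbu : b ≠ u) (hbv : b ≠ v) :
    (leafContract F u v).Adj u b ↔ F.Adj u b ∨ F.Adj v b := by
  simp only [leafContract, dotContract]
  grind [SimpleGraph.irrefl]

theorem leafContract_adj_of_ne {a b : V} (hau : a ≠ u) (hav : a ≠ v) (hbu : b ≠ u) (hbv : b ≠ v) :
    (leafContract F u v).Adj a b ↔ F.Adj a b := by
  simp only [leafContract, dotContract]
  grind [SimpleGraph.irrefl]

variable [Fintype V]

theorem neighborFinset_leafContract_of_ne (huv : u ≠ v) {w : V} (hwu : w ≠ u) (hwv : w ≠ v) :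
    (leafContract F u v).neighborFinset w =
      (F.neighborFinset w).image fun x => if x = v then u else x := by
  ext b
  simp only [mem_neighborFinset, Finset.mem_image]
  simp only [leafContract, dotContract]
  grind [SimpleGraph.irrefl]

theorem degree_leafContract_right (huv : u ≠ v) : (leafContract F u v).degree v = 1 := by
  rw [← card_neighborFinset_eq_degree, Finset.card_eq_one]
  exact ⟨u, Finset.ext fun b => by simp [leafContract_adj_right_iff huv]⟩

theorem degree_le_degree_leafContract_left (huv : u ≠ v) :
    F.degree u ≤ (leafContract F u v).degree u := by
  rw [← card_neighborFinset_eq_degree, ← card_neighborFinset_eq_degree]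
  refine Finset.card_le_card fun b hb => ?_
  rw [mem_neighborFinset] at hb ⊢
  obtain rfl | hbv := eq_or_ne b v
  · exact leafContract_adj_left_right huv
  · exact (leafContract_adj_left_iff huv hb.ne' hbv).2 (Or.inl hb)

theorem degree_leafContract_of_ne (huv : u ≠ v) {w : V} (hwu : w ≠ u) (hwv : w ≠ v)
    (hw : ¬ (F.Adj w u ∧ F.Adj w v)) : (leafContract F u v).degree w = F.degree w := by
  rw [← card_neighborFinset_eq_degree, neighborFinset_leafContract_of_ne huv hwu hwv,
    Finset.card_image_of_injOn, card_neighborFinset_eq_degree]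
  intro x hx y hy hxy
  simp only [coe_neighborFinset, mem_neighborSet] at hx hy
  grind

end LeafContraction

section LeafComponentsOfLeafContraction

variable [Fintype V] {F : SimpleGraph V} {u v : V}

theorem lcGraph_adj_iff_lcGraph_leafContract_adj (huv : u ≠ v)
    (hcommon : ∀ w, ¬ (F.Adj w u ∧ F.Adj w v)) {a b : V} (hau : a ≠ u) (hav : a ≠ v)
    (hbu : b ≠ u) (hbv : b ≠ v) :
    (lcGraph F).Adj a b ↔ (lcGraph (leafContract F u v)).Adj a b := by
  rw [lcGraph_adj_s10, lcGraph_adj_s10, leafContract_adj_of_ne hau hav hbu hbv,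
    degree_leafContract_of_ne huv hau hav (hcommon a),
    degree_leafContract_of_ne huv hbu hbv (hcommon b)]

theorem supp_lcGraph_leafContract (huv : u ≠ v) (hcommon : ∀ w, ¬ (F.Adj w u ∧ F.Adj w v))
    (hu : 2 ≤ F.degree u) (hv : 2 ≤ F.degree v) :
    ((lcGraph (leafContract F u v)).connectedComponentMk u).supp =
      ((lcGraph F).connectedComponentMk u).supp ∪ ((lcGraph F).connectedComponentMk v).supp := by
  rw [supp_lcGraph_of_two_le_degree (hu.trans (degree_le_degree_leafContract_left huv)),
    supp_lcGraph_of_two_le_degree hu, supp_lcGraph_of_two_le_degree hv]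
  ext y
  obtain rfl | hyu := eq_or_ne y u
  · simp
  obtain rfl | hyv := eq_or_ne y v
  · simp [leafContract_adj_left_right huv, degree_leafContract_right huv]
  simp only [Set.mem_union, Set.mem_ofPred_eq, hyu, hyv, false_or,
    leafContract_adj_left_iff huv hyu hyv, degree_leafContract_of_ne huv hyu hyv (hcommon y)]
  tauto

end LeafComponentsOfLeafContraction

/-- **Leaf-contraction Lemma.** The leaf component partition of the
leaf-contraction of a forest along an internal edge `e = uv`: the orders `κ_i`, `κ_j` of
the leaf components containing `u` and `v` are replaced by `κ_i + κ_j`. -/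
theorem leaf_contraction_lemma
    {V : Type} [Fintype V] (F : SimpleGraph V) (hF : F.IsAcyclic)
    (u v : V) (he : s(u, v) ∈ internalEdges F) :
    lcMultiset (leafContract F u v) =
      (leafCompOrder F u + leafCompOrder F v) ::ₘ
        (((lcMultiset F).erase (leafCompOrder F u)).erase (leafCompOrder F v)) := by
  have huv : F.Adj u v := he.1
  have hu : 2 ≤ F.degree u := he.2 u (Sym2.mem_mk_left u v)
  have hv : 2 ≤ F.degree v := he.2 v (Sym2.mem_mk_right u v)
  have hcommon : ∀ w, ¬ (F.Adj w u ∧ F.Adj w v) := fun w h =>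
    hF.not_adj_of_adj_of_adj huv h.1 h.2
  have hS := supp_lcGraph_leafContract huv.ne hcommon hu hv
  set S := ((lcGraph (leafContract F u v)).connectedComponentMk u).supp
  have huS : u ∈ S := rfl
  have hvS : v ∈ S := hS ▸ Or.inr rfl
  refine compSizes_of_supp_eq_union (connectedComponentMk_lcGraph_ne hu hv huv.ne) hS
    fun x y hx hy => lcGraph_adj_iff_lcGraph_leafContract_adj huv.ne hcommon
      (ne_of_mem_of_not_mem huS hx).symm (ne_of_mem_of_not_mem hvS hx).symm
      (ne_of_mem_of_not_mem huS hy).symm (ne_of_mem_of_not_mem hvS hy).symm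

end

end CSFPaper
end
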